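/- arXiv:2003.02558 — 9 statements merged into one kernel-verified Lean document; each statement's English description precedes it below -/
import Mathlib

section
/- Let G be a group and S a nonempty subset of G. Then the subgroup generated by S⁻¹S equals the subgroup generated by S if and only if S is not contained in any coset gG' where g ∈ G and G' is a proper subgroup of the subgroup generated by S. -/
open Pointwise

/-- The set of hermitian squares of an involution semigroup. -/
def hermSq (S : Type*) [Mul S] [Star S] : Set S := {a | ∃ x : S, a = x * star x}

/-- `T` is an involution subsemigroup. -/
def IsInvSub {S : Type*} [Mul S] [Star S] (T : Set S) : Prop :=
  (∀ x ∈ T, ∀ y ∈ T, x * y ∈ T) ∧ ∀ x ∈ T, star x ∈ T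

/-- `T` is an HS-stable involution subsemigroup. -/
def IsHSStable {S : Type*} [Mul S] [Star S] (T : Set S) : Prop :=
  IsInvSub T ∧ hermSq S ⊆ T ∧
    ∀ h ∈ hermSq S, ∀ x y : S, x * h * y ∈ T → x * y ∈ T

/-- The HS-stable involution subsemigroup generated by `B`. -/
def genHS {S : Type*} [Mul S] [Star S] (B : Set S) : Set S :=
  ⋂₀ {T | IsHSStable T ∧ B ⊆ T}

/-- The involution subsemigroup generated by `B`. -/
def genInv {S : Type*} [Mul S] [Star S] (B : Set S) : Set S :=
  ⋂₀ {T | IsInvSub T ∧ B ⊆ T}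

/-- The closure `Tω`. -/
def omegaCl {S : Type*} [Mul S] (T : Set S) : Set S := {s | ∃ t ∈ T, s * t ∈ T}

/-- `S² = {x y : x, y ∈ S}`. -/
def sqSet (S : Type*) [Mul S] : Set S := {a | ∃ x y : S, a = x * y}

/-- Iterated complex product `A 0 * A 1 * ⋯ * A n`. -/
def pprod {S : Type*} [Mul S] (A : ℕ → Set S) : ℕ → Set S
  | 0 => A 0
  | (k+1) => pprod A k * A (k+1)

namespace Subgroup

variable {G : Type*} [Group G]

theorem closure_inv_mul_le (S : Set G) : closure (S⁻¹ * S) ≤ closure S :=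
  (closure_le _).2 <| Set.mul_subset_iff.2 fun _ hx _ hy ↦
    mul_mem (by simpa using inv_mem (subset_closure (Set.mem_inv.1 hx))) (subset_closure hy)

theorem inv_mul_subset_of_subset_leftCoset {S : Set G} {H : Subgroup G} {g : G}
    (hS : S ⊆ g • (H : Set G)) : S⁻¹ * S ⊆ H :=
  Set.mul_subset_iff.2 fun x hx y hy ↦ by
    have hx' := (mem_leftCoset_iff g).1 (hS (Set.mem_inv.1 hx))
    have hy' := (mem_leftCoset_iff g).1 (hS hy)
    simpa [mul_assoc] using mul_mem (inv_mem hx') hy'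

theorem subset_leftCoset_closure_inv_mul {S : Set G} {s : G} (hs : s ∈ S) :
    S ⊆ s • (closure (S⁻¹ * S) : Set G) := fun _ ht ↦
  (mem_leftCoset_iff s).2 <| subset_closure <| Set.mul_mem_mul (Set.inv_mem_inv.2 hs) ht

end Subgroup

theorem stmt0 {G : Type*} [Group G] (S : Set G) (hS : S.Nonempty) :
    Subgroup.closure (S⁻¹ * S) = Subgroup.closure S ↔
      ¬ ∃ (g : G) (G' : Subgroup G), G' < Subgroup.closure S ∧
          S ⊆ (fun h => g * h) '' (G' : Set G) := by
  constructor
  · rintro hclosure ⟨g, G', hlt, hcoset⟩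
    have hle : Subgroup.closure (S⁻¹ * S) ≤ G' :=
      (Subgroup.closure_le G').2 (Subgroup.inv_mul_subset_of_subset_leftCoset hcoset)
    exact hlt.not_ge (hclosure ▸ hle)
  · intro hnot
    obtain ⟨s, hs⟩ := hS
    by_contra hne
    exact hnot ⟨s, _, (Subgroup.closure_inv_mul_le S).lt_of_ne hne,
      Subgroup.subset_leftCoset_closure_inv_mul hs⟩
end

section
/- Let S be an involution semigroup, S₁, ..., Sₙ nonempty subsets of S, and 1 ≤ k ≤ n. Then the complex product S₁⋯S_k S_k*⋯S₁* is contained in the HS-stable involution subsemigroup generated by the complex product S₁⋯Sₙ. -/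
open Pointwise

lemma exists_mul_mem_pprod {S : Type*} [Semigroup S] {A : ℕ → Set S} {k m : ℕ} (hkm : k < m)
    (hne : ∀ i, k < i → i ≤ m → (A i).Nonempty) :
    ∃ a, ∀ p ∈ pprod A k, p * a ∈ pprod A m := by
  induction m, hkm using Nat.le_induction with
  | base =>
    obtain ⟨a, ha⟩ := hne (k + 1) k.lt_succ_self le_rfl
    exact ⟨a, fun p hp => Set.mul_mem_mul hp ha⟩
  | succ m hkm ih =>
    obtain ⟨a, ha⟩ := ih fun i hki him => hne i hki (him.trans m.le_succ)
    obtain ⟨b, hb⟩ := hne (m + 1) (by omega) le_rfl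
    exact ⟨a * b, fun p hp => mul_assoc p a b ▸ Set.mul_mem_mul (ha p hp) hb⟩

lemma IsInvSub.mul_star_mem {S : Type*} [Mul S] [Star S] {T : Set S} (hT : IsInvSub T)
    {p q : S} (hp : p ∈ T) (hq : q ∈ T) : p * star q ∈ T :=
  hT.1 p hp _ (hT.2 q hq)

/-- `(p a) (q a)* = p (a a*) q*`, and HS-stability cancels the hermitian square `a a*`. -/
lemma IsHSStable.mul_star_mem_of_mul_mem {S : Type*} [Semigroup S] [StarMul S] {T : Set S}
    (hT : IsHSStable T) {p q a : S} (hp : p * a ∈ T) (hq : q * a ∈ T) : p * star q ∈ T := by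
  refine hT.2.2 (a * star a) ⟨a, rfl⟩ p (star q) ?_
  simpa only [star_mul, mul_assoc] using hT.1.mul_star_mem hp hq

theorem stmt2 {S : Type*} [Semigroup S] [StarMul S] (A : ℕ → Set S) (n k : ℕ)
    (hk : k ≤ n) (hne : ∀ i ≤ n, (A i).Nonempty) :
    pprod A k * ((star ·) '' pprod A k) ⊆ genHS (pprod A n) := by
  rintro _ ⟨p, hp, _, ⟨q, hq, rfl⟩, rfl⟩ T ⟨hT, hsub⟩
  rcases hk.lt_or_eq with hkn | rfl
  · obtain ⟨a, ha⟩ := exists_mul_mem_pprod hkn fun i _ hin => hne i hin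
    exact hT.mul_star_mem_of_mul_mem (hsub (ha p hp)) (hsub (ha q hq))
  · exact hT.1.mul_star_mem (hsub hp) (hsub hq)
end

section
/- Let S be an involution semigroup, S₁, ..., Sₙ nonempty subsets of S, and S' an involution subsemigroup. Then the HS-stable involution subsemigroup generated by S₁⋯Sₙ is a proper subset of S' if and only if there exist an HS-stable involution subsemigroup T properly contained in S' and elements a₁, ..., a_{n-1} ∈ S with a_{i-1} S_i a_i* ⊆ T for all 1 < i < n, S₁ a₁* ⊆ T, and a_{n-1} Sₙ ⊆ T. -/
open Pointwise

/-!
In an HS-stable `T`, `u * star c ∈ T` and `c * v ∈ T` give `u * v ∈ T`: the product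
`u * (star c * c) * v` lies in `T`, and the hermitian square `star c * c` may be deleted.
Chaining this along `a₀, …, a_{m-1}` puts `A 0 * ⋯ * A m` inside `T`. Conversely, for
`T = ⟪A 0 * ⋯ * A m⟫` one may take for `a i` any element of `A 0 * ⋯ * A i`: two elements
`u, v` of that product, followed by a common tail from `A (i+1) * ⋯ * A m`, give `u * c` and
`v * c` in `T`, hence `u * star v ∈ T`.
-/

section Generated

variable {S : Type*} [Mul S] [Star S]

lemma isHSStable_genHS (B : Set S) : IsHSStable (genHS B) := by
  refine ⟨⟨?_, ?_⟩, ?_, ?_⟩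
  · exact fun u hu v hv => Set.mem_sInter.mpr fun T hT =>
      hT.1.1.1 u (Set.mem_sInter.mp hu T hT) v (Set.mem_sInter.mp hv T hT)
  · exact fun u hu => Set.mem_sInter.mpr fun T hT => hT.1.1.2 u (Set.mem_sInter.mp hu T hT)
  · exact fun h hh => Set.mem_sInter.mpr fun T hT => hT.1.2.1 hh
  · exact fun h hh u v huv => Set.mem_sInter.mpr fun T hT =>
      hT.1.2.2 h hh u v (Set.mem_sInter.mp huv T hT)

lemma subset_genHS (B : Set S) : B ⊆ genHS B :=
  fun _ hb => Set.mem_sInter.mpr fun _ hT => hT.2 hb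

lemma genHS_subset {B T : Set S} (hT : IsHSStable T) (hB : B ⊆ T) : genHS B ⊆ T :=
  Set.sInter_subset_of_mem ⟨hT, hB⟩

end Generated

namespace IsHSStable

variable {S : Type*} [Semigroup S] [StarMul S] {T : Set S}

lemma mul_mem_of_mul_star_mem (hT : IsHSStable T) {u c v : S}
    (hu : u * star c ∈ T) (hv : c * v ∈ T) : u * v ∈ T := by
  have hprod : u * (star c * c) * v ∈ T := by
    simpa only [mul_assoc] using hT.1.1 _ hu _ hv
  exact hT.2.2 _ ⟨star c, by rw [star_star]⟩ u v hprod

lemma mul_star_mem_of_mul_mem_s3 (hT : IsHSStable T) {u c v : S}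
    (hu : u * c ∈ T) (hv : v * c ∈ T) : u * star v ∈ T := by
  have hv' : star c * star v ∈ T := star_mul v c ▸ hT.1.2 _ hv
  exact hT.mul_mem_of_mul_star_mem (by rwa [star_star]) hv'

end IsHSStable

section Products

variable {S : Type*} {A : ℕ → Set S}

lemma mul_mem_pprod [Mul S] {i : ℕ} (hi : 0 < i) {w s : S} (hw : w ∈ pprod A (i - 1))
    (hs : s ∈ A i) : w * s ∈ pprod A i := by
  obtain ⟨j, rfl⟩ : ∃ j, i = j + 1 := ⟨i - 1, by omega⟩
  exact Set.mul_mem_mul hw hs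

lemma pprod_nonempty [Mul S] {m : ℕ} (hne : ∀ i ≤ m, (A i).Nonempty) :
    (pprod A m).Nonempty := by
  induction m with
  | zero => exact hne 0 le_rfl
  | succ m ih => exact (ih fun i hi => hne i (by omega)).mul (hne (m + 1) le_rfl)

lemma exists_forall_mem_pprod [Mul S] {m : ℕ} (hne : ∀ i ≤ m, (A i).Nonempty) :
    ∃ a : ℕ → S, ∀ i ≤ m, a i ∈ pprod A i := by
  obtain ⟨x, -⟩ := hne 0 (Nat.zero_le m)
  have : ∀ i, ∃ a : S, i ≤ m → a ∈ pprod A i := fun i =>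
    if hi : i ≤ m then (pprod_nonempty fun j hj => hne j (by omega)).imp fun _ ha _ => ha
    else ⟨x, fun h => absurd h hi⟩
  choose a ha using this
  exact ⟨a, ha⟩

lemma exists_forall_mul_mem_pprod [Semigroup S] {j m : ℕ} (hjm : j < m)
    (hne : ∀ i ≤ m, (A i).Nonempty) : ∃ c : S, ∀ w ∈ pprod A j, w * c ∈ pprod A m := by
  induction m, hjm using Nat.le_induction with
  | base =>
    obtain ⟨c, hc⟩ := hne (j + 1) le_rfl
    exact ⟨c, fun w hw => Set.mul_mem_mul hw hc⟩
  | succ m _ ih =>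
    obtain ⟨c, hc⟩ := ih fun i hi => hne i (by omega)
    obtain ⟨y, hy⟩ := hne (m + 1) le_rfl
    exact ⟨c * y, fun w hw => mul_assoc w c y ▸ Set.mul_mem_mul (hc w hw) hy⟩

lemma mul_star_mem_genHS_pprod [Semigroup S] [StarMul S] {i m : ℕ} (him : i < m)
    (hne : ∀ k ≤ m, (A k).Nonempty) {u v : S} (hu : u ∈ pprod A i) (hv : v ∈ pprod A i) :
    u * star v ∈ genHS (pprod A m) := by
  obtain ⟨c, hc⟩ := exists_forall_mul_mem_pprod him hne
  exact (isHSStable_genHS _).mul_star_mem_of_mul_mem_s3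
    (subset_genHS _ (hc u hu)) (subset_genHS _ (hc v hv))

lemma pprod_subset_of_chain [Semigroup S] [StarMul S] {T : Set S} (hT : IsHSStable T)
    {m : ℕ} (hm : 1 ≤ m) {a : ℕ → S} (h0 : ∀ s ∈ A 0, s * star (a 0) ∈ T)
    (hmid : ∀ i, 0 < i → i < m → ∀ s ∈ A i, a (i - 1) * s * star (a i) ∈ T)
    (hlast : ∀ s ∈ A m, a (m - 1) * s ∈ T) : pprod A m ⊆ T := by
  have hchain : ∀ k < m, ∀ w ∈ pprod A k, w * star (a k) ∈ T := by
    intro k hk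
    induction k with
    | zero => exact h0
    | succ k ih =>
      rintro _ ⟨v, hv, s, hs, rfl⟩
      have hlink : a k * (s * star (a (k + 1))) ∈ T := by
        simpa only [mul_assoc, Nat.add_sub_cancel] using hmid (k + 1) k.succ_pos hk s hs
      simpa only [mul_assoc] using
        hT.mul_mem_of_mul_star_mem (ih (by omega) v hv) hlink
  obtain ⟨n, rfl⟩ : ∃ n, m = n + 1 := ⟨m - 1, by omega⟩
  rintro _ ⟨v, hv, s, hs, rfl⟩
  exact hT.mul_mem_of_mul_star_mem (hchain n n.lt_succ_self v hv) (hlast s hs)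

end Products

theorem stmt3_general {S : Type*} [Semigroup S] [StarMul S] (A : ℕ → Set S) (m : ℕ) (hm : 1 ≤ m)
    (hne : ∀ i ≤ m, (A i).Nonempty) (S' : Set S) :
    genHS (pprod A m) ⊂ S' ↔
      ∃ T : Set S, IsHSStable T ∧ T ⊂ S' ∧ ∃ a : ℕ → S,
        (∀ s ∈ A 0, s * star (a 0) ∈ T) ∧
        (∀ i, 0 < i → i < m → ∀ s ∈ A i, a (i - 1) * s * star (a i) ∈ T) ∧
        (∀ s ∈ A m, a (m - 1) * s ∈ T) := by
  constructor
  · intro hsub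
    obtain ⟨a, ha⟩ := exists_forall_mem_pprod hne
    refine ⟨genHS (pprod A m), isHSStable_genHS _, hsub, a, ?_, ?_, ?_⟩
    · exact fun s hs => mul_star_mem_genHS_pprod hm hne hs (ha 0 (Nat.zero_le m))
    · exact fun i hi him s hs => mul_star_mem_genHS_pprod him hne
        (mul_mem_pprod hi (ha (i - 1) (by omega)) hs) (ha i him.le)
    · exact fun s hs => subset_genHS _ (mul_mem_pprod hm (ha (m - 1) (by omega)) hs)
  · rintro ⟨T, hT, hTS', a, h0, hmid, hlast⟩
    exact (genHS_subset hT (pprod_subset_of_chain hT hm h0 hmid hlast)).trans_ssubset hTS'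

theorem stmt3 {S : Type*} [Semigroup S] [StarMul S] (A : ℕ → Set S) (m : ℕ) (hm : 1 ≤ m)
    (hne : ∀ i ≤ m, (A i).Nonempty) (S' : Set S) (hS' : IsInvSub S') :
    genHS (pprod A m) ⊂ S' ↔
      ∃ T : Set S, IsHSStable T ∧ T ⊂ S' ∧ ∃ a : ℕ → S,
        (∀ s ∈ A 0, s * star (a 0) ∈ T) ∧
        (∀ i, 0 < i → i < m → ∀ s ∈ A i, a (i - 1) * s * star (a i) ∈ T) ∧
        (∀ s ∈ A m, a (m - 1) * s ∈ T) :=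
  stmt3_general A m hm hne S'
end

section
/- Let S be an involution semigroup and T an HS-stable involution subsemigroup. Then every idempotent of S lies in T, and for every x ∈ S, x H_S² x* ⊆ T. -/
open Pointwise

/-! Both parts come from cancelling a hermitian square out of a product of two elements of `T`.
For an idempotent `e`, `e (e e*) (e* e) = (e e*)(e* e) ∈ T`, so cancelling `e e*` gives `e (e* e) ∈ T`,
which equals `e (e* e) e`; cancelling `e* e` leaves `e e = e`. For the second part,
`x (g g*) x* = (x g)(x g)*` is a hermitian square, hence in `T`, and
`(x g g* x*)(x h h* x*) = (x g g*)(x* x)(h h* x*)`, from which the middle factor `x* x` cancels. -/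

theorem mul_star_self_mem_hermSq {S : Type*} [Mul S] [Star S] (x : S) :
    x * star x ∈ hermSq S :=
  ⟨x, rfl⟩

theorem star_mul_self_mem_hermSq {S : Type*} [Mul S] [InvolutiveStar S] (x : S) :
    star x * x ∈ hermSq S :=
  ⟨star x, by rw [star_star]⟩

theorem mul_mul_star_mem_hermSq {S : Type*} [Semigroup S] [StarMul S] {h : S}
    (hh : h ∈ hermSq S) (x : S) : x * h * star x ∈ hermSq S := by
  obtain ⟨g, rfl⟩ := hh
  exact ⟨x * g, by simp only [star_mul, mul_assoc]⟩

namespace IsHSStable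

variable {S : Type*} {T : Set S}

theorem mul_mem [Mul S] [Star S] (hT : IsHSStable T) {x y : S} (hx : x ∈ T) (hy : y ∈ T) :
    x * y ∈ T :=
  hT.1.1 x hx y hy

theorem hermSq_subset [Mul S] [Star S] (hT : IsHSStable T) : hermSq S ⊆ T :=
  hT.2.1

theorem mem_of_mul_mul_mem [Mul S] [Star S] (hT : IsHSStable T) {h : S} (hh : h ∈ hermSq S)
    {x y : S} (hxy : x * h * y ∈ T) : x * y ∈ T :=
  hT.2.2 h hh x y hxy

theorem mem_of_isIdempotentElem [Semigroup S] [InvolutiveStar S] (hT : IsHSStable T) {e : S}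
    (he : IsIdempotentElem e) : e ∈ T := by
  have hprod : e * star e * (star e * e) ∈ T :=
    hT.mul_mem (hT.hermSq_subset (mul_star_self_mem_hermSq e))
      (hT.hermSq_subset (star_mul_self_mem_hermSq e))
  have hleft : e * (star e * e) ∈ T := by
    refine hT.mem_of_mul_mul_mem (mul_star_self_mem_hermSq e) ?_
    rwa [← mul_assoc e e, he.eq]
  have hee : e * e ∈ T := by
    refine hT.mem_of_mul_mul_mem (star_mul_self_mem_hermSq e) ?_
    rwa [mul_assoc, mul_assoc, he.eq]
  rwa [he.eq] at hee

theorem mul_mul_star_mem [Semigroup S] [StarMul S] (hT : IsHSStable T) {h : S}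
    (hh : h ∈ hermSq S) (x : S) : x * h * star x ∈ T :=
  hT.hermSq_subset (mul_mul_star_mem_hermSq hh x)

theorem mul_mul_mul_star_mem [Semigroup S] [StarMul S] (hT : IsHSStable T) {h h' : S}
    (hh : h ∈ hermSq S) (hh' : h' ∈ hermSq S) (x : S) : x * (h * h') * star x ∈ T := by
  have hprod : x * h * star x * (x * h' * star x) ∈ T :=
    hT.mul_mem (hT.mul_mul_star_mem hh x) (hT.mul_mul_star_mem hh' x)
  have hcancel : x * h * (h' * star x) ∈ T := by
    refine hT.mem_of_mul_mul_mem (star_mul_self_mem_hermSq x) ?_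
    simpa only [mul_assoc] using hprod
  simpa only [mul_assoc] using hcancel

end IsHSStable

theorem stmt8 {S : Type*} [Semigroup S] [StarMul S] (T : Set S) (hT : IsHSStable T) :
    (∀ e : S, e * e = e → e ∈ T) ∧
      ∀ x : S, ∀ h ∈ hermSq S, ∀ h' ∈ hermSq S, x * (h * h') * star x ∈ T :=
  ⟨fun _ he => hT.mem_of_isIdempotentElem he,
    fun x _ hh _ hh' => hT.mul_mul_mul_star_mem hh hh' x⟩
end

section
/- Let S be an involution semigroup generated, as a semigroup, by its set of idempotents. Then S has no proper HS-stable involution subsemigroup (i.e., S is HS-simple). -/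
/-! For an idempotent `e`, the element `e (e* e) e = (e e*)(e* e)` is a product of hermitian
squares, so HS-stability lets us delete the middle factor `e* e` and get `e = e e ∈ T`.
Since `T` is closed under products, it then contains the subsemigroup generated by the
idempotents, which is all of `S`. -/

open Pointwise

namespace IsHSStable

def toSubsemigroup {S : Type*} [Mul S] [Star S] {T : Set S} (hT : IsHSStable T) :
    Subsemigroup S where
  carrier := T
  mul_mem' {x y} hx hy := hT.1.1 x hx y hy

theorem idempotent_mem {S : Type*} [Semigroup S] [StarMul S] {T : Set S} (hT : IsHSStable T)
    {e : S} (he : e * e = e) : e ∈ T := by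
  obtain ⟨⟨hmul, -⟩, hherm, hstab⟩ := hT
  have hstar : star e * star e = star e := by rw [← star_mul, he]
  have hprod : e * (star e * e) * e ∈ T := by
    have heq : e * (star e * e) * e = e * star e * (star e * e) := by
      simp only [mul_assoc, he, ← mul_assoc (star e) (star e), hstar]
    rw [heq]
    exact hmul _ (hherm ⟨e, rfl⟩) _ (hherm (star_mul_self_mem_hermSq e))
  simpa only [he] using hstab _ (star_mul_self_mem_hermSq e) e e hprod

end IsHSStable

theorem stmt9 {S : Type*} [Semigroup S] [StarMul S]
    (hgen : ∀ s : S, s ∈ Subsemigroup.closure {e : S | e * e = e}) :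
    ∀ T : Set S, IsHSStable T → T = Set.univ := by
  intro T hT
  refine Set.eq_univ_of_forall fun s => ?_
  have hidem : {e : S | e * e = e} ⊆ hT.toSubsemigroup := fun _ he => hT.idempotent_mem he
  exact Subsemigroup.closure_le.2 hidem (hgen s)
end

section
/- Let S be an involution semigroup and T an involution subsemigroup. Then T is HS-stable if and only if T ∩ S² is HS-stable. In particular, S² is an HS-stable involution subsemigroup of S. -/
open Pointwise

theorem mul_mem_sqSet {S : Type*} [Mul S] (x y : S) : x * y ∈ sqSet S := ⟨x, y, rfl⟩

theorem IsInvSub.inter {S : Type*} [Mul S] [Star S] {A B : Set S} (hA : IsInvSub A)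
    (hB : IsInvSub B) : IsInvSub (A ∩ B) :=
  ⟨fun x hx y hy => ⟨hA.1 x hx.1 y hy.1, hB.1 x hx.2 y hy.2⟩,
    fun x hx => ⟨hA.2 x hx.1, hB.2 x hx.2⟩⟩

theorem IsHSStable.inter {S : Type*} [Mul S] [Star S] {A B : Set S} (hA : IsHSStable A)
    (hB : IsHSStable B) : IsHSStable (A ∩ B) :=
  ⟨hA.1.inter hB.1, Set.subset_inter hA.2.1 hB.2.1,
    fun h hh x y hxy => ⟨hA.2.2 h hh x y hxy.1, hB.2.2 h hh x y hxy.2⟩⟩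

theorem isInvSub_sqSet (S : Type*) [Mul S] [StarMul S] : IsInvSub (sqSet S) := by
  refine ⟨fun x _ y _ => mul_mem_sqSet x y, ?_⟩
  rintro _ ⟨x, y, rfl⟩
  rw [star_mul]
  exact mul_mem_sqSet _ _

theorem isHSStable_sqSet (S : Type*) [Mul S] [StarMul S] : IsHSStable (sqSet S) :=
  ⟨isInvSub_sqSet S, fun _ ⟨x, hx⟩ => hx ▸ mul_mem_sqSet x (star x),
    fun _ _ x y _ => mul_mem_sqSet x y⟩

/-- Every `x * h * y` already lies in `S²`, so stability of `T ∩ S²` is stability of `T`. -/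
theorem IsHSStable.of_inter_sqSet {S : Type*} [Mul S] [Star S] {T : Set S} (hT : IsInvSub T)
    (h : IsHSStable (T ∩ sqSet S)) : IsHSStable T :=
  ⟨hT, fun _ ha => (h.2.1 ha).1,
    fun k hk x y hxy => (h.2.2 k hk x y ⟨hxy, mul_mem_sqSet (x * k) y⟩).1⟩

theorem stmt12 {S : Type*} [Semigroup S] [StarMul S] (T : Set S) (hT : IsInvSub T) :
    (IsHSStable T ↔ IsHSStable (T ∩ sqSet S)) ∧ IsHSStable (sqSet S) :=
  ⟨⟨fun h => h.inter (isHSStable_sqSet S), IsHSStable.of_inter_sqSet hT⟩, isHSStable_sqSet S⟩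
end

section
/- Let S be an involution semigroup with S = S² and T ⊆ S. Then T is an HS-stable involution subsemigroup if and only if T is closed (T = Tω) and x H_S² x* ⊆ T for each x ∈ S. -/
open Pointwise

/-!
If `T` is HS-stable, `s = u v` and `t, s t ∈ T`, then `u (v t)(v t)* v = (s t) t* (v* v) ∈ T`, and
deleting the hermitian square `(v t)(v t)*` gives `s ∈ T`. Conversely, by closedness a membership
`s ∈ T` only needs a witness `t ∈ T` with `s t ∈ T`, and the witnesses (`s*`, hermitian squares,
conjugates) can be chosen so that `s t` is, up to reassociation, of the form `x h h' x*`.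
-/

section

variable {S : Type*} [Semigroup S] [StarMul S] {T : Set S}

lemma mul_star_mem_hermSq (x : S) : x * star x ∈ hermSq S := ⟨x, rfl⟩

lemma star_mul_mem_hermSq (x : S) : star x * x ∈ hermSq S := ⟨star x, by rw [star_star]⟩

lemma star_eq_of_mem_hermSq {h : S} (hh : h ∈ hermSq S) : star h = h := by
  obtain ⟨x, rfl⟩ := hh
  rw [star_mul, star_star]

/-- The condition `x H_S² x* ⊆ T` for every `x ∈ S`. -/
def IsHermSqConjClosed (T : Set S) : Prop :=
  ∀ x : S, ∀ h ∈ hermSq S, ∀ h' ∈ hermSq S, x * (h * h') * star x ∈ T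

lemma subset_omegaCl (hstar : ∀ t ∈ T, star t ∈ T) (hH : hermSq S ⊆ T) : T ⊆ omegaCl T :=
  fun s hs ↦ ⟨star s, hstar s hs, hH (mul_star_mem_hermSq s)⟩

namespace IsHSStable

lemma omegaCl_subset (hS2 : sqSet S = Set.univ) (hT : IsHSStable T) : omegaCl T ⊆ T := by
  obtain ⟨⟨hmul, hstar⟩, hH, hstab⟩ := hT
  rintro s ⟨t, ht, hst⟩
  obtain ⟨u, v, rfl⟩ : s ∈ sqSet S := hS2 ▸ Set.mem_univ s
  have hprod : (u * v * t * star t) * (star v * v) ∈ T :=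
    hmul _ (hmul _ hst _ (hstar t ht)) _ (hH (star_mul_mem_hermSq v))
  refine hstab _ (mul_star_mem_hermSq (v * t)) u v ?_
  convert hprod using 1
  simp only [star_mul, mul_assoc]

lemma omegaCl_eq (hS2 : sqSet S = Set.univ) (hT : IsHSStable T) : T = omegaCl T :=
  (subset_omegaCl hT.1.2 hT.2.1).antisymm (hT.omegaCl_subset hS2)

lemma isHermSqConjClosed (hT : IsHSStable T) : IsHermSqConjClosed T := by
  rintro x h ⟨y, rfl⟩ h' ⟨z, rfl⟩
  have hsq : (x * (y * star y) * z) * star (x * (y * star y) * z) ∈ T :=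
    hT.2.1 (mul_star_mem_hermSq _)
  -- the square is `x (y y*)(z z*)(y y*) x*`; delete the last `y y*`
  have hdel := hT.2.2 _ (mul_star_mem_hermSq y) (x * (y * star y) * (z * star z)) (star x)
    (by convert hsq using 1; simp only [star_mul, star_star, mul_assoc])
  simpa only [mul_assoc] using hdel

end IsHSStable

lemma hermSq_subset_of_omegaCl_subset (hω : omegaCl T ⊆ T) (hconj : IsHermSqConjClosed T) :
    hermSq S ⊆ T := by
  rintro _ ⟨x, rfl⟩
  refine hω ⟨x * (star x * x * (star x * x)) * star x,
    hconj x _ (star_mul_mem_hermSq x) _ (star_mul_mem_hermSq x), ?_⟩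
  convert hconj (x * star x) _ (mul_star_mem_hermSq x) _ (mul_star_mem_hermSq x) using 1
  simp only [star_mul, star_star, mul_assoc]

lemma star_mem_of_omegaCl_subset (hω : omegaCl T ⊆ T) (hconj : IsHermSqConjClosed T) {t : S}
    (ht : t ∈ T) : star t ∈ T :=
  hω ⟨t, ht, hermSq_subset_of_omegaCl_subset hω hconj (star_mul_mem_hermSq t)⟩

lemma conj_mem_of_omegaCl_subset (hω : omegaCl T ⊆ T) (hconj : IsHermSqConjClosed T) (x : S)
    {h : S} (hh : h ∈ hermSq S) : x * h * star x ∈ T := by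
  refine hω ⟨x * star x, hermSq_subset_of_omegaCl_subset hω hconj (mul_star_mem_hermSq x), ?_⟩
  simpa only [mul_assoc] using hconj x h hh _ (star_mul_mem_hermSq x)

lemma mul_mem_of_omegaCl_subset (hω : omegaCl T ⊆ T) (hconj : IsHermSqConjClosed T) {a b : S}
    (ha : a ∈ T) (hb : b ∈ T) : a * b ∈ T := by
  refine hω ⟨star b, star_mem_of_omegaCl_subset hω hconj hb, ?_⟩
  -- `a (b b*) ∈ Tω`, witnessed by `a*`
  refine hω ⟨star a, star_mem_of_omegaCl_subset hω hconj ha, ?_⟩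
  simpa only [mul_assoc] using conj_mem_of_omegaCl_subset hω hconj a (mul_star_mem_hermSq b)

lemma mem_of_mul_hermSq_mul_mem_of_omegaCl_subset (hω : omegaCl T ⊆ T)
    (hconj : IsHermSqConjClosed T) {h : S} (hh : h ∈ hermSq S) {x y : S} (hxy : x * h * y ∈ T) :
    x * y ∈ T := by
  refine hω ⟨star y * h * star x, ?_, ?_⟩
  · have := star_mem_of_omegaCl_subset hω hconj hxy
    rwa [star_mul, star_mul, star_eq_of_mem_hermSq hh, ← mul_assoc] at this
  · simpa only [mul_assoc] using hconj x _ (mul_star_mem_hermSq y) h hh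

lemma isHSStable_of_omegaCl_subset (hω : omegaCl T ⊆ T) (hconj : IsHermSqConjClosed T) :
    IsHSStable T :=
  ⟨⟨fun _ ha _ hb ↦ mul_mem_of_omegaCl_subset hω hconj ha hb,
      fun _ ht ↦ star_mem_of_omegaCl_subset hω hconj ht⟩,
    hermSq_subset_of_omegaCl_subset hω hconj,
    fun _ hh _ _ hxy ↦ mem_of_mul_hermSq_mul_mem_of_omegaCl_subset hω hconj hh hxy⟩

end

theorem stmt15 {S : Type*} [Semigroup S] [StarMul S] (hS2 : sqSet S = Set.univ)
    (T : Set S) :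
    IsHSStable T ↔
      (T = omegaCl T ∧
        ∀ x : S, ∀ h ∈ hermSq S, ∀ h' ∈ hermSq S, x * (h * h') * star x ∈ T) :=
  ⟨fun hT ↦ ⟨hT.omegaCl_eq hS2, hT.isHermSqConjClosed⟩,
    fun ⟨hω, hconj⟩ ↦ isHSStable_of_omegaCl_subset hω.superset hconj⟩
end

section
/- Let S be a regular *-semigroup. Then H_S = {e ∈ E_S : e* = e} ⊆ E_S, and H_S² = E_S. -/
open Pointwise

/-! Regularity `x x* x = x` makes every `x x*` a projection, and a projection `p` is `p p*`.
For projections `p, q`, regularity of `pq` reads `pq · qp · pq = pq`, which collapses to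
`(pq)² = pq`. Conversely an idempotent `e` factors as `(e e*)(e* e)`, because
`e (e* e*) e = e e* e = e`. -/

section RegularStarSemigroup

variable {S : Type*} [Semigroup S] [StarMul S]

theorem isStarProjection_mul_star_self (hreg : ∀ x : S, x * star x * x = x) (x : S) :
    IsStarProjection (x * star x) where
  isIdempotentElem := by
    rw [IsIdempotentElem, ← mul_assoc, hreg]
  isSelfAdjoint := by
    rw [IsSelfAdjoint, star_mul, star_star]

theorem mem_hermSq_of_isStarProjection {p : S} (hp : IsStarProjection p) : p ∈ hermSq S :=
  ⟨p, by rw [hp.isSelfAdjoint.star_eq, hp.isIdempotentElem.eq]⟩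

theorem mem_hermSq_iff_isStarProjection (hreg : ∀ x : S, x * star x * x = x) {a : S} :
    a ∈ hermSq S ↔ IsStarProjection a := by
  refine ⟨?_, mem_hermSq_of_isStarProjection⟩
  rintro ⟨x, rfl⟩
  exact isStarProjection_mul_star_self hreg x

theorem IsStarProjection.isIdempotentElem_mul (hreg : ∀ x : S, x * star x * x = x) {p q : S}
    (hp : IsStarProjection p) (hq : IsStarProjection q) : IsIdempotentElem (p * q) := by
  have hpq := hreg (p * q)
  rw [star_mul, hq.isSelfAdjoint.star_eq, hp.isSelfAdjoint.star_eq] at hpq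
  calc p * q * (p * q) = p * (q * q) * (p * p) * q := by
        rw [hq.isIdempotentElem.eq, hp.isIdempotentElem.eq]; simp only [mul_assoc]
    _ = p * q * (q * p) * (p * q) := by simp only [mul_assoc]
    _ = p * q := hpq

theorem mul_star_self_mul_star_mul_self_of_isIdempotentElem (hreg : ∀ x : S, x * star x * x = x)
    {e : S} (he : IsIdempotentElem e) : e * star e * (star e * e) = e := by
  have hstar : star e * star e = star e := by rw [← star_mul, he.eq]
  calc e * star e * (star e * e) = e * (star e * star e) * e := by simp only [mul_assoc]
    _ = e := by rw [hstar, hreg]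

theorem hermSq_mul_hermSq (hreg : ∀ x : S, x * star x * x = x) :
    hermSq S * hermSq S = {e : S | IsIdempotentElem e} := by
  refine Set.Subset.antisymm ?_ fun e (he : IsIdempotentElem e) => ?_
  · rintro _ ⟨p, hp, q, hq, rfl⟩
    rw [mem_hermSq_iff_isStarProjection hreg] at hp hq
    exact hp.isIdempotentElem_mul hreg hq
  · exact ⟨e * star e, ⟨e, rfl⟩, star e * e, ⟨star e, by rw [star_star]⟩,
      mul_star_self_mul_star_mul_self_of_isIdempotentElem hreg he⟩

end RegularStarSemigroup

theorem stmt18 {S : Type*} [Semigroup S] [StarMul S]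
    (hreg : ∀ x : S, x * star x * x = x) :
    hermSq S = {e : S | e * e = e ∧ star e = e} ∧
      hermSq S ⊆ {e : S | e * e = e} ∧
      hermSq S * hermSq S = {e : S | e * e = e} := by
  have hproj : hermSq S = {e : S | e * e = e ∧ star e = e} := by
    ext a
    rw [mem_hermSq_iff_isStarProjection hreg, isStarProjection_iff]
    rfl
  refine ⟨hproj, ?_, hermSq_mul_hermSq hreg⟩
  rw [hproj]
  exact fun _ he => he.1
end

section
/- Let Y be a (meet-)semilattice and A₁, ..., Aₙ nonempty subsets of Y. Then the subsemilattice generated by A₁ ∪ ⋯ ∪ Aₙ equals the subsemilattice generated by the complex product A₁A₂⋯Aₙ if and only if for all 1 ≤ i, j ≤ n and every α ∈ A_i there exists β ∈ A_j with α ≤ β. -/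
open Pointwise

/-- Iterated complex product of subsets of a meet-semilattice. -/
def iprod {Y : Type*} [SemilatticeInf Y] (A : ℕ → Set Y) : ℕ → Set Y
  | 0 => A 0
  | (k+1) => {c : Y | ∃ a ∈ iprod A k, ∃ b ∈ A (k+1), c = a ⊓ b}

/-- The subsemilattice generated by a subset of a meet-semilattice. -/
def genSL {Y : Type*} [SemilatticeInf Y] (B : Set Y) : Set Y :=
  ⋂₀ {T | (∀ a ∈ T, ∀ b ∈ T, a ⊓ b ∈ T) ∧ B ⊆ T}

/-!
The condition says that every `A i` lies in the lower closure of every `A j`. Each element of the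
product lies below some element of every factor, and a lower closure is inf-closed, so it contains
the whole subsemilattice generated by the product; hence equality of the generated subsemilattices
forces the condition. Conversely, under the condition an element of `A i` absorbs every other
factor and so is itself an element of the product, while the product always lies in the
subsemilattice generated by the union.
-/

section Semilattice
variable {Y : Type*} [SemilatticeInf Y]

theorem genSL_eq_infClosure (B : Set Y) : genSL B = infClosure B := by
  refine (Set.sInter_subset_of_mem ?_).antisymm
    (infClosure_min (Set.subset_sInter fun _ hT => hT.2) (infClosed_sInter ?_))
  · exact ⟨fun _ ha _ hb => infClosed_infClosure ha hb, subset_infClosure⟩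
  · exact fun _ hT _ ha _ hb => hT.1 _ ha _ hb

theorem infClosed_lowerClosure (s : Set Y) : InfClosed (lowerClosure s : Set Y) :=
  (lowerClosure s).lower.infClosed

theorem iprod_subset_of_infClosed {A : ℕ → Set Y} {S : Set Y} (hS : InfClosed S) {k : ℕ}
    (hA : ∀ i ≤ k, A i ⊆ S) : iprod A k ⊆ S := by
  induction k with
  | zero => exact hA 0 le_rfl
  | succ k ih =>
    rintro _ ⟨a, ha, b, hb, rfl⟩
    exact hS (ih (fun i hi => hA i (by omega)) ha) (hA (k + 1) le_rfl hb)

theorem mem_lowerClosure_iprod {A : ℕ → Set Y} {α : Y} {k : ℕ} :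
    α ∈ lowerClosure (iprod A k) ↔ ∀ j ≤ k, α ∈ lowerClosure (A j) := by
  induction k with
  | zero => simp [iprod]
  | succ k ih =>
    constructor
    · rintro ⟨_, ⟨c, hc, b, hb, rfl⟩, hα⟩ j hj
      rcases Nat.le_succ_iff.1 hj with hj | rfl
      · exact ih.1 ⟨c, hc, hα.trans inf_le_left⟩ j hj
      · exact ⟨b, hb, hα.trans inf_le_right⟩
    · intro h
      obtain ⟨c, hc, hαc⟩ := ih.2 fun j hj => h j (by omega)
      obtain ⟨b, hb, hαb⟩ := h (k + 1) le_rfl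
      exact ⟨c ⊓ b, ⟨c, hc, b, hb, rfl⟩, le_inf hαc hαb⟩

-- `α` absorbs the factor it lies below: `α = α ⊓ b` when `i ≤ k`, and `α = c ⊓ α` when `i = k + 1`.
theorem mem_iprod_of_mem_lowerClosure {A : ℕ → Set Y} {α : Y} {i k : ℕ} (hα : α ∈ A i)
    (hi : i ≤ k) (hαP : α ∈ lowerClosure (iprod A k)) : α ∈ iprod A k := by
  induction k with
  | zero => rwa [Nat.le_zero.mp hi] at hα
  | succ k ih =>
    obtain ⟨_, ⟨c, hc, b, hb, rfl⟩, hαcb⟩ := hαP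
    rcases Nat.le_succ_iff.1 hi with hi | rfl
    · exact ⟨α, ih hi ⟨c, hc, hαcb.trans inf_le_left⟩,
        b, hb, (inf_eq_left.2 (hαcb.trans inf_le_right)).symm⟩
    · exact ⟨c, hc, α, hα, (inf_eq_right.2 (hαcb.trans inf_le_left)).symm⟩

end Semilattice

theorem stmt19_general {Y : Type*} [SemilatticeInf Y] (A : ℕ → Set Y) (n : ℕ) :
    genSL (⋃ i ∈ Set.Iic n, A i) = genSL (iprod A n) ↔
      ∀ i ≤ n, ∀ j ≤ n, ∀ α ∈ A i, ∃ β ∈ A j, α ≤ β := by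
  rw [genSL_eq_infClosure, genSL_eq_infClosure]
  have hU : ∀ {i α}, i ≤ n → α ∈ A i → α ∈ ⋃ i ∈ Set.Iic n, A i :=
    fun hi hα => Set.mem_biUnion (Set.mem_Iic.2 hi) hα
  constructor
  · intro hEq i hi j hj α hα
    have hαP : α ∈ infClosure (iprod A n) := hEq ▸ subset_infClosure (hU hi hα)
    exact mem_lowerClosure.1 <| mem_lowerClosure_iprod.1
      (infClosure_min subset_lowerClosure (infClosed_lowerClosure _) hαP) j hj
  · intro hCond
    refine (infClosure_min ?_ infClosed_infClosure).antisymm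
      (infClosure_min (iprod_subset_of_infClosed infClosed_infClosure
        fun i hi _ hα => subset_infClosure (hU hi hα)) infClosed_infClosure)
    simp only [Set.iUnion_subset_iff, Set.mem_Iic]
    intro i hi α hα
    exact subset_infClosure <| mem_iprod_of_mem_lowerClosure hα hi <|
      mem_lowerClosure_iprod.2 fun j hj => mem_lowerClosure.2 (hCond i hi j hj α hα)

theorem stmt19 {Y : Type*} [SemilatticeInf Y] (A : ℕ → Set Y) (n : ℕ)
    (hne : ∀ i ≤ n, (A i).Nonempty) :
    genSL (⋃ i ∈ Set.Iic n, A i) = genSL (iprod A n) ↔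
      ∀ i ≤ n, ∀ j ≤ n, ∀ α ∈ A i, ∃ β ∈ A j, α ≤ β :=
  stmt19_general A n
end
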